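/- For all positive integers n, ∑_{k=0}^{n} b_k b_{n-k} = -(n-1) b_n - (n-2) b_{n-1}, where by convention b_m = 0 for m < 0. -/

import Mathlib

/-- Bernoulli numbers of the second kind: `b 0 = 1` and for `n ≥ 1`,
`b n = -∑_{k=1}^{n} (-1)^k b_{n-k}/(k+1)`. -/
def bernoulliSnd : ℕ → ℚ
  | 0 => 1
  | n + 1 =>
      -∑ k ∈ Finset.range (n + 1),
        (-1 : ℚ) ^ (k + 1) * bernoulliSnd (n - k) / (k + 2)
  decreasing_by exact Nat.lt_succ_of_le (Nat.sub_le n k)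

/-- Extension of the Bernoulli numbers of the second kind to integer indices,
with `b m = 0` for `m < 0`. -/
def bernoulliSndInt (m : ℤ) : ℚ :=
  if m < 0 then 0 else bernoulliSnd m.toNat

/-!
With `F = ∑ bₙ Xⁿ` and `L = log (1 + X)`, the recursion says `F * L = X`. Differentiating gives
`F' L + F / (1 + X) = 1`; multiplying by `F` and using `F L = X` turns this into
`F² = (1 + X) (F - X F')`, whose `n`-th coefficient is the identity.
-/

open PowerSeries Finset

theorem sum_antidiagonal_bernoulliSnd_mul (n : ℕ) :
    ∑ p ∈ antidiagonal (n + 1), bernoulliSnd p.1 * ((-1) ^ p.2 / (p.2 + 1)) = 0 := by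
  rw [Nat.sum_antidiagonal_succ', ← Nat.sum_antidiagonal_swap,
    Nat.sum_antidiagonal_eq_sum_range_succ_mk, bernoulliSnd]
  simp only [Prod.swap_prod_mk, pow_zero, CharP.cast_eq_zero, zero_add, div_one, mul_one]
  rw [neg_add_eq_zero]
  refine sum_congr rfl fun k _ => ?_
  push_cast
  ring

noncomputable def bernoulliSndSeries : ℚ⟦X⟧ := mk bernoulliSnd

theorem bernoulliSndSeries_mul_log : bernoulliSndSeries * log ℚ = X := by
  ext n
  rcases n with _ | _ | n
  · simp
  · simp [coeff_mul, bernoulliSndSeries, Nat.sum_antidiagonal_succ, bernoulliSnd]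
  · rw [coeff_mul, Nat.sum_antidiagonal_succ', coeff_X, if_neg (by omega),
      ← sum_antidiagonal_bernoulliSnd_mul n]
    simp only [bernoulliSndSeries, coeff_mk, coeff_log, if_true, mul_zero, zero_add]
    refine sum_congr rfl fun p _ => ?_
    simp [pow_succ]

theorem one_add_X_mul_derivative_log {A : Type*} [CommRing A] [Algebra ℚ A] :
    (1 + X) * d⁄dX A (log A) = 1 := by
  have h : d⁄dX A (log A) = rescale (-1) (mk 1) := by
    ext n
    simp [deriv_log, coeff_rescale]
  have := congrArg (rescale (-1 : A)) (mk_one_mul_one_sub_eq_one (S := A))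
  rw [map_mul, map_one, map_sub, map_one, rescale_X, map_neg, map_one, neg_one_mul,
    sub_neg_eq_add] at this
  rw [h, mul_comm, this]

theorem sq_eq_of_mul_log_eq_X {A : Type*} [CommRing A] [Algebra ℚ A] {f : A⟦X⟧}
    (hf : f * log A = X) : f ^ 2 = (1 + X) * (f - X * d⁄dX A f) := by
  have hderiv : d⁄dX A f * log A + f * d⁄dX A (log A) = 1 := by
    simpa [Derivation.leibniz, smul_eq_mul, mul_comm, add_comm] using congrArg (d⁄dX A) hf
  linear_combination (-(1 + X) * d⁄dX A f) * hf + ((1 + X) * f) * hderiv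
    - f ^ 2 * one_add_X_mul_derivative_log (A := A)

theorem coeff_X_mul_derivative {R : Type*} [CommSemiring R] (f : R⟦X⟧) (n : ℕ) :
    coeff n (X * d⁄dX R f) = n * coeff n f := by
  rcases n with _ | n
  · simp
  · rw [coeff_succ_X_mul, coeff_derivative, mul_comm]
    push_cast
    rfl

theorem coeff_succ_one_add_X_mul {R : Type*} [Semiring R] (f : R⟦X⟧) (n : ℕ) :
    coeff (n + 1) ((1 + X) * f) = coeff (n + 1) f + coeff n f := by
  rw [add_mul, one_mul, map_add, coeff_succ_X_mul]

theorem bernoulliSndInt_natCast (n : ℕ) : bernoulliSndInt n = bernoulliSnd n := by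
  simp [bernoulliSndInt]

theorem sum_mul_bernoulliSnd_general (n : ℕ) :
    ∑ k ∈ Finset.range (n + 1), bernoulliSnd k * bernoulliSnd (n - k) =
      -((n : ℚ) - 1) * bernoulliSnd n
        - ((n : ℚ) - 2) * bernoulliSndInt ((n : ℤ) - 1) := by
  rcases n with _ | m
  · simp [bernoulliSnd, bernoulliSndInt]
  have h := congrArg (coeff (m + 1)) (sq_eq_of_mul_log_eq_X bernoulliSndSeries_mul_log)
  rw [sq, coeff_mul, Nat.sum_antidiagonal_eq_sum_range_succ_mk, coeff_succ_one_add_X_mul,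
    map_sub, map_sub, coeff_X_mul_derivative, coeff_X_mul_derivative] at h
  simp only [bernoulliSndSeries, coeff_mk] at h
  rw [h, show ((m + 1 : ℕ) : ℤ) - 1 = m by omega, bernoulliSndInt_natCast]
  push_cast
  ring

theorem sum_mul_bernoulliSnd (n : ℕ) (hn : 0 < n) :
    ∑ k ∈ Finset.range (n + 1), bernoulliSnd k * bernoulliSnd (n - k) =
      -((n : ℚ) - 1) * bernoulliSnd n
        - ((n : ℚ) - 2) * bernoulliSndInt ((n : ℤ) - 1) :=
  sum_mul_bernoulliSnd_general n
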